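/- Let x ∈ 𝔻 with #Ã₁(x) ≤ 1, i.e. the set Ã₁(x) of times of the largest modulus jump of x on (0,1] has at most one element. Then the modulus record time trimmer R̃_trim is jointly J1-continuous at x: for every sequence x_n ∈ 𝔻 converging to x in the J1-topology there exist λ_n ∈ Λ such that simultaneously ‖λ_n − I‖ → 0, ‖x_n ∘ λ_n − x‖ → 0 and ‖R̃_trim(x_n) ∘ λ_n − R̃_trim(x)‖ → 0. -/

import Mathlib

open Filter Topology Set unitInterval

noncomputable section

open scoped Classical

instance : Fact ((0:ℝ) ≤ 1) := ⟨zero_le_one⟩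

/-- The space `𝔻` of càdlàg functions on `[0,1]`: right-continuous everywhere with
finite left limits everywhere (conditions at the endpoints hold vacuously). -/
def Cadlag (x : I → ℝ) : Prop :=
  (∀ τ : I, Tendsto x (𝓝[>] τ) (𝓝 (x τ))) ∧ (∀ τ : I, ∃ l : ℝ, Tendsto x (𝓝[<] τ) (𝓝 l))

/-- The sup-norm `‖x‖ = sup_{0 ≤ τ ≤ 1} |x(τ)|`. -/
def dNorm (x : I → ℝ) : ℝ := ⨆ τ : I, |x τ|

/-- The jump `Δx(τ) = x(τ) - x(τ-)` of `x` at `τ`, with `Δx(0) := 0`. -/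
def jump (x : I → ℝ) (τ : I) : ℝ := if τ = 0 then 0 else x τ - Function.leftLim x τ

/-- The running supremum `S(x)(τ) = sup_{0 ≤ s ≤ τ} x(s)`. -/
def runSup (x : I → ℝ) (τ : I) : ℝ := sSup (x '' {s : I | s ≤ τ})

/-- The running absolute supremum `S̃(x)(τ) = sup_{0 ≤ s ≤ τ} |x(s)|`. -/
def runAbsSup (x : I → ℝ) (τ : I) : ℝ := sSup ((fun s => |x s|) '' {s : I | s ≤ τ})

/-- The largest positive jump `S_{+Δ}(x)(τ) = sup_{0 ≤ s ≤ τ} Δx(s)`. -/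
def posJumpSup (x : I → ℝ) (τ : I) : ℝ := sSup (jump x '' {s : I | s ≤ τ})

/-- The largest modulus jump `S̃_Δ(x)(τ) = sup_{0 ≤ s ≤ τ} |Δx(s)|`. -/
def modJumpSup (x : I → ℝ) (τ : I) : ℝ := sSup ((fun s => |jump x s|) '' {s : I | s ≤ τ})

/-- The first extremal positive trimming ("trim as you go") operator
`T^{(1,+)}_{rim}(x) = x - S_{+Δ}(x)`. -/
def trimPos (x : I → ℝ) : I → ℝ := fun τ => x τ - posJumpSup x τ

/-- `Λ`: continuous strictly increasing bijections of `[0,1]` fixing the endpoints. -/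
def IsTimeChange (l : I → I) : Prop := Continuous l ∧ StrictMono l ∧ l 0 = 0 ∧ l 1 = 1

/-- Convergence in the (strong) Skorokhod `J₁`-topology. -/
def J1Tendsto (xn : ℕ → I → ℝ) (x : I → ℝ) : Prop :=
  ∃ l : ℕ → I → I, (∀ n, IsTimeChange (l n)) ∧
    Tendsto (fun n => dNorm (fun τ => (l n τ : ℝ) - (τ : ℝ))) atTop (𝓝 0) ∧
    Tendsto (fun n => dNorm (fun τ => xn n (l n τ) - x τ)) atTop (𝓝 0)

/-- `Ã_τ(x)`: the times `s ∈ (0,τ]` of the largest modulus jump of `x` on `[0,τ]`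
(empty when `S̃_Δ(x)(τ) = 0`). -/
def tildeA (x : I → ℝ) (τ : I) : Set I :=
  {s : I | 0 < s ∧ s ≤ τ ∧ 0 < |jump x s| ∧ |jump x s| = modJumpSup x τ}

/-- `A⁺_τ(x)`: the times `s ∈ (0,τ]` of the largest positive jump of `x` on `[0,τ]`
(empty when `S_{+Δ}(x)(τ) = 0`). -/
def posA (x : I → ℝ) (τ : I) : Set I :=
  {s : I | 0 < s ∧ s ≤ τ ∧ 0 < jump x s ∧ jump x s = posJumpSup x τ}

/-- The signed largest-modulus ("trim as you go") trimmer `𝔗_rim`: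
`𝔗_rim(x)(τ) = x(τ) - Δx(L̃_τ(x))` if `Ã_τ(x) ≠ ∅`, `x(τ)` otherwise, where
`L̃_τ(x) = max Ã_τ(x)`. -/
def sgnModTrim (x : I → ℝ) : I → ℝ := fun τ =>
  if (tildeA x τ).Nonempty then x τ - jump x (sSup (tildeA x τ)) else x τ

/-- The record time ("lookback") trimmer:
`R_trim(x) = x - Δx(R₁(x))·1_{[R₁(x),1]}` if `A⁺₁(x) ≠ ∅`, `x` otherwise, where
`R₁(x) = min A⁺₁(x)`. -/
def recordTrim (x : I → ℝ) : I → ℝ := fun τ =>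
  if (posA x 1).Nonempty ∧ sInf (posA x 1) ≤ τ then x τ - jump x (sInf (posA x 1)) else x τ

/-- The modulus record time trimmer:
`R̃_trim(x) = x - Δx(R̃₁(x))·1_{[R̃₁(x),1]}` if `Ã₁(x) ≠ ∅`, `x` otherwise, where
`R̃₁(x) = min Ã₁(x)`. -/
def modRecordTrim (x : I → ℝ) : I → ℝ := fun τ =>
  if (tildeA x 1).Nonempty ∧ sInf (tildeA x 1) ≤ τ then x τ - jump x (sInf (tildeA x 1)) else x τ


/-! The time changes witnessing `x_n → x` already work. If the largest jump of `x` sits at a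
single time `t`, it is separated from all other jumps by a gap, because a càdlàg function has only
finitely many jumps above any positive level. A time change `λ` with `‖x_n ∘ λ - x‖ ≤ ε` moves
every jump by at most `2ε`, so once `4ε` is below the gap the largest jump of `x_n` sits exactly at
`λ t`, and removing it from `x_n` and from `x` keeps the two paths within `3ε`. If `x` has no
largest jump it has no jumps at all, and then every jump of `x_n` is at most `2ε`. -/

section Jumps

variable {x : I → ℝ} {t τ : I}

lemma jump_zero (x : I → ℝ) : jump x 0 = 0 := if_pos rfl

lemma jump_of_ne_zero (x : I → ℝ) (h : τ ≠ 0) : jump x τ = x τ - Function.leftLim x τ :=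
  if_neg h

lemma modJumpSup_one_eq_of_forall_le (h : ∀ u, |jump x u| ≤ |jump x t|) :
    modJumpSup x 1 = |jump x t| :=
  IsGreatest.csSup_eq ⟨⟨t, le_one', rfl⟩, by rintro _ ⟨u, -, rfl⟩; exact h u⟩

lemma mem_tildeA_one_of_forall_le (h : ∀ u, |jump x u| ≤ |jump x t|) (ht : jump x t ≠ 0) :
    t ∈ tildeA x 1 := by
  have ht0 : t ≠ 0 := by rintro rfl; exact ht (jump_zero x)
  exact ⟨pos_iff_ne_zero.2 ht0, le_one', abs_pos.2 ht, (modJumpSup_one_eq_of_forall_le h).symm⟩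

lemma tildeA_one_eq_singleton (ht : 0 < t) (h : ∀ u ≠ t, |jump x u| < |jump x t|) :
    tildeA x 1 = {t} := by
  have hmax : ∀ u, |jump x u| ≤ |jump x t| := fun u => by
    rcases eq_or_ne u t with rfl | hu
    · rfl
    · exact (h u hu).le
  have hjt : jump x t ≠ 0 := by
    simpa [jump_zero] using h 0 ht.ne
  refine eq_singleton_iff_unique_mem.2 ⟨mem_tildeA_one_of_forall_le hmax hjt, fun u hu => ?_⟩
  by_contra hne
  exact (h u hne).ne (hu.2.2.2.trans (modJumpSup_one_eq_of_forall_le hmax))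

end Jumps

namespace IsTimeChange

variable {l : I → I}

lemma surjective (hl : IsTimeChange l) : Function.Surjective l := fun y => by
  obtain ⟨s, -, hs⟩ := intermediate_value_Icc (zero_le_one' I) hl.1.continuousOn
    (by rw [hl.2.2.1, hl.2.2.2]; exact ⟨nonneg', le_one'⟩ : y ∈ Icc (l 0) (l 1))
  exact ⟨s, hs⟩

lemma pos (hl : IsTimeChange l) {s : I} (hs : 0 < s) : 0 < l s :=
  hl.2.2.1 ▸ hl.2.1 hs

lemma tendsto_nhdsLT (hl : IsTimeChange l) (s : I) : Tendsto l (𝓝[<] s) (𝓝[<] l s) :=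
  tendsto_nhdsWithin_iff.2
    ⟨(hl.1.tendsto s).mono_left nhdsWithin_le_nhds,
      eventually_nhdsWithin_of_forall fun _ hu => hl.2.1 hu⟩

end IsTimeChange

namespace Cadlag

variable {x y : I → ℝ} {s t τ : I}

lemma exists_bound (hx : Cadlag x) : ∃ C, ∀ τ, |x τ| ≤ C := by
  have hloc : ∀ τ, ∃ U ∈ 𝓝 τ, Bornology.IsBounded (x '' U) := by
    intro τ
    obtain ⟨c, hc⟩ := hx.2 τ
    have hnear : ∀ᶠ u in 𝓝 τ, x u ∈ Metric.ball c 1 ∪ Metric.ball (x τ) 1 := by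
      rw [← nhdsLT_sup_nhdsGE, eventually_sup]
      exact ⟨(hc.eventually_mem (Metric.ball_mem_nhds c one_pos)).mono fun _ => Or.inl,
        ((continuousWithinAt_Ioi_iff_Ici.1 (hx.1 τ)).eventually_mem
          (Metric.ball_mem_nhds _ one_pos)).mono fun _ => Or.inr⟩
    exact ⟨_, hnear, (Metric.isBounded_ball.union Metric.isBounded_ball).subset
      (image_subset_iff.2 fun _ h => h)⟩
  obtain ⟨C, hC⟩ := isBounded_iff_forall_norm_le.1
    (Bornology.isBounded_image_of_isLocallyBounded_of_isCompact isCompact_univ hloc)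
  exact ⟨C, fun τ => hC _ (mem_image_of_mem x (mem_univ τ))⟩

lemma tendsto_leftLim (hx : Cadlag x) (hτ : τ ≠ 0) :
    Tendsto x (𝓝[<] τ) (𝓝 (Function.leftLim x τ)) := by
  have := nhdsLT_neBot_of_exists_lt ⟨0, pos_iff_ne_zero.2 hτ⟩
  obtain ⟨c, hc⟩ := hx.2 τ
  rwa [leftLim_eq_of_tendsto hc]

lemma abs_jump_comp_sub_le (hx : Cadlag x) (hy : Cadlag y) {l : I → I} (hl : IsTimeChange l)
    {ε : ℝ} (hε : ∀ τ, |y (l τ) - x τ| ≤ ε) (s : I) :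
    |jump y (l s) - jump x s| ≤ 2 * ε := by
  rcases eq_or_ne s 0 with rfl | hs
  · simp only [hl.2.2.1, jump_zero, sub_zero, abs_zero]
    linarith [(abs_nonneg _).trans (hε 0)]
  have hls : l s ≠ 0 := (hl.pos (pos_iff_ne_zero.2 hs)).ne'
  have := nhdsLT_neBot_of_exists_lt ⟨0, pos_iff_ne_zero.2 hs⟩
  have hlim : |Function.leftLim y (l s) - Function.leftLim x s| ≤ ε :=
    le_of_tendsto (((hy.tendsto_leftLim hls).comp (hl.tendsto_nhdsLT s)).sub
      (hx.tendsto_leftLim hs)).abs (Eventually.of_forall hε)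
  rw [jump_of_ne_zero y hls, jump_of_ne_zero x hs]
  calc _ = |(y (l s) - x s) - (Function.leftLim y (l s) - Function.leftLim x s)| := by ring_nf
    _ ≤ _ := abs_sub _ _
    _ ≤ 2 * ε := by linarith [hε s]

lemma abs_jump_lt_two_mul (hx : Cadlag x) {c r : ℝ} (h : ∀ᶠ v in 𝓝 τ, dist (x v) c < r) :
    |jump x τ| < 2 * r := by
  have hxτ : dist (x τ) c < r := h.self_of_nhds
  rcases eq_or_ne τ 0 with rfl | hτ
  · rw [jump_zero, abs_zero]
    linarith [dist_nonneg.trans_lt hxτ]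
  have := nhdsLT_neBot_of_exists_lt ⟨0, pos_iff_ne_zero.2 hτ⟩
  have hlim : dist (Function.leftLim x τ) c ≤ r :=
    le_of_tendsto ((hx.tendsto_leftLim hτ).dist tendsto_const_nhds)
      ((h.filter_mono nhdsWithin_le_nhds).mono fun _ => le_of_lt)
  rw [jump_of_ne_zero x hτ, ← Real.dist_eq]
  linarith [dist_triangle_right (x τ) (Function.leftLim x τ) c]

lemma eventually_abs_jump_lt (hx : Cadlag x) {U : Set I} (hU : IsOpen U) {c δ : ℝ}
    (h : Tendsto x (𝓝[U] τ) (𝓝 c)) (hδ : 0 < δ) : ∀ᶠ u in 𝓝[U] τ, |jump x u| < δ := by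
  have hclose : ∀ᶠ v in 𝓝[U] τ, dist (x v) c < δ / 2 := Metric.tendsto_nhds.1 h _ (half_pos hδ)
  filter_upwards [eventually_eventually_nhdsWithin.2 hclose, self_mem_nhdsWithin] with u hu huU
  rw [hU.nhdsWithin_eq huU] at hu
  simpa only [mul_div_cancel₀ δ two_ne_zero] using hx.abs_jump_lt_two_mul hu

lemma eventually_abs_jump_lt_nhdsNE (hx : Cadlag x) {δ : ℝ} (hδ : 0 < δ) (τ : I) :
    ∀ᶠ u in 𝓝[≠] τ, |jump x u| < δ := by
  obtain ⟨c, hc⟩ := hx.2 τ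
  rw [← Iio_union_Ioi, nhdsWithin_union, eventually_sup]
  exact ⟨hx.eventually_abs_jump_lt isOpen_Iio hc hδ,
    hx.eventually_abs_jump_lt isOpen_Ioi (hx.1 τ) hδ⟩

lemma finite_setOf_le_abs_jump (hx : Cadlag x) {δ : ℝ} (hδ : 0 < δ) :
    {s | δ ≤ |jump x s|}.Finite := by
  by_contra h
  obtain ⟨τ, hτ⟩ := Set.Infinite.exists_accPt_principal h
  obtain ⟨u, hsmall, hbig⟩ := ((hx.eventually_abs_jump_lt_nhdsNE hδ τ).and_frequently
    (accPt_iff_frequently_nhdsNE.1 hτ)).exists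
  exact hsmall.not_ge hbig

lemma exists_forall_abs_jump_le (hx : Cadlag x) (hs : jump x s ≠ 0) :
    ∃ t, ∀ u, |jump x u| ≤ |jump x t| := by
  obtain ⟨t, hts, ht⟩ := Set.exists_max_image _ (fun u => |jump x u|)
    (hx.finite_setOf_le_abs_jump (abs_pos.2 hs)) ⟨s, le_rfl (a := |jump x s|)⟩
  refine ⟨t, fun u => ?_⟩
  by_cases hu : |jump x s| ≤ |jump x u|
  · exact ht u hu
  · exact (not_le.1 hu).le.trans hts

lemma jump_eq_zero_of_tildeA_eq_empty (hx : Cadlag x) (hA : tildeA x 1 = ∅) (s : I) :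
    jump x s = 0 := by
  by_contra hs
  obtain ⟨t, ht⟩ := hx.exists_forall_abs_jump_le hs
  have hjt : jump x t ≠ 0 := abs_pos.1 ((abs_pos.2 hs).trans_le (ht s))
  exact (hA ▸ mem_tildeA_one_of_forall_le ht hjt : t ∈ (∅ : Set I))

lemma abs_jump_lt_of_tildeA_subsingleton (hx : Cadlag x) (hA : (tildeA x 1).Subsingleton)
    (ht : t ∈ tildeA x 1) {u : I} (hu : u ≠ t) : |jump x u| < |jump x t| := by
  have hjt : jump x t ≠ 0 := abs_pos.1 ht.2.2.1
  obtain ⟨t', ht'⟩ := hx.exists_forall_abs_jump_le hjt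
  have hjt' : jump x t' ≠ 0 := abs_pos.1 (ht.2.2.1.trans_le (ht' t))
  have hmax : ∀ v, |jump x v| ≤ |jump x t| := hA (mem_tildeA_one_of_forall_le ht' hjt') ht ▸ ht'
  refine (hmax u).lt_of_ne fun heq => hu (hA (mem_tildeA_one_of_forall_le (heq ▸ hmax) ?_) ht)
  exact abs_pos.1 (heq ▸ ht.2.2.1)

lemma exists_lt_forall_ne_abs_jump_lt (hx : Cadlag x) {c : ℝ} (hc : 0 < c)
    (h : ∀ u ≠ t, |jump x u| < c) :
    ∃ M < c, ∀ u ≠ t, |jump x u| < M := by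
  have hF := hx.finite_setOf_le_abs_jump (half_pos hc)
  have hev : ∀ᶠ M in 𝓝[<] c,
      c / 2 < M ∧ ∀ u ∈ {s | c / 2 ≤ |jump x s|}, u ≠ t → |jump x u| < M := by
    refine (eventually_nhdsWithin_of_eventually_nhds (eventually_gt_nhds (half_lt_self hc))).and
      ((hF.eventually_all).2 fun u _ => ?_)
    rcases eq_or_ne u t with rfl | hu
    · exact Eventually.of_forall fun _ h => absurd rfl h
    · exact (eventually_nhdsWithin_of_eventually_nhds (eventually_gt_nhds (h u hu))).mono
        fun _ hM _ => hM
  obtain ⟨M, ⟨hM2, hMF⟩, hMc⟩ := (hev.and self_mem_nhdsWithin).exists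
  refine ⟨M, hMc, fun u hu => ?_⟩
  by_cases hbig : c / 2 ≤ |jump x u|
  · exact hMF u hbig hu
  · linarith

end Cadlag

lemma dNorm_nonneg (f : I → ℝ) : 0 ≤ dNorm f := Real.iSup_nonneg fun _ => abs_nonneg _

lemma dNorm_le {f : I → ℝ} {c : ℝ} (h : ∀ τ, |f τ| ≤ c) : dNorm f ≤ c := ciSup_le h

lemma abs_le_dNorm {f : I → ℝ} (hf : BddAbove (range fun τ => |f τ|)) (τ : I) :
    |f τ| ≤ dNorm f :=
  le_ciSup hf τ

lemma abs_comp_sub_le_dNorm {x y : I → ℝ} (hx : Cadlag x) (hy : Cadlag y) (l : I → I) (τ : I) :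
    |y (l τ) - x τ| ≤ dNorm fun τ => y (l τ) - x τ := by
  obtain ⟨C, hC⟩ := hx.exists_bound
  obtain ⟨D, hD⟩ := hy.exists_bound
  refine abs_le_dNorm (f := fun τ => y (l τ) - x τ) ⟨D + C, ?_⟩ τ
  rintro _ ⟨s, rfl⟩
  exact (abs_sub _ _).trans (add_le_add (hD _) (hC s))

lemma tildeA_eq_singleton_of_abs_jump_comp_sub_le {x y : I → ℝ} {l : I → I}
    (hl : IsTimeChange l) {t : I} (ht : 0 < t) {M η : ℝ} (hgap : ∀ s ≠ t, |jump x s| < M)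
    (hη : ∀ s, |jump y (l s) - jump x s| ≤ η) (hM : M + 2 * η ≤ |jump x t|) :
    tildeA y 1 = {l t} := by
  refine tildeA_one_eq_singleton (hl.pos ht) fun u hu => ?_
  obtain ⟨s, rfl⟩ := hl.surjective u
  have hs : s ≠ t := by rintro rfl; exact hu rfl
  have hys := abs_sub_abs_le_abs_sub (jump y (l s)) (jump x s)
  have hyt := abs_sub_abs_le_abs_sub (jump x t) (jump y (l t))
  rw [abs_sub_comm] at hyt
  linarith [hη s, hη t, hgap s hs]

section Trim

variable {x y : I → ℝ} {s τ : I} {ε δ : ℝ}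

lemma abs_modRecordTrim_sub_le_of_tildeA_eq_empty (hA : tildeA x 1 = ∅)
    (hε : |y s - x τ| ≤ ε) (hδ : ∀ u, |jump y u| ≤ δ) :
    |modRecordTrim y s - modRecordTrim x τ| ≤ ε + δ := by
  have hδ0 : 0 ≤ δ := (abs_nonneg _).trans (hδ 0)
  simp only [modRecordTrim, hA, Set.not_nonempty_empty, false_and, if_false]
  split_ifs
  · calc _ = |(y s - x τ) - jump y (sInf (tildeA y 1))| := by ring_nf
      _ ≤ _ := abs_sub _ _
      _ ≤ ε + δ := add_le_add hε (hδ _)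
  · linarith

lemma abs_modRecordTrim_sub_le_of_tildeA_eq_singleton {t t' : I} (hx : tildeA x 1 = {t})
    (hy : tildeA y 1 = {t'}) (hst : t' ≤ s ↔ t ≤ τ) (hε : |y s - x τ| ≤ ε)
    (hδ : |jump y t' - jump x t| ≤ δ) :
    |modRecordTrim y s - modRecordTrim x τ| ≤ ε + δ := by
  simp only [modRecordTrim, hx, hy, singleton_nonempty, true_and, csInf_singleton, hst]
  split_ifs
  · calc _ = |(y s - x τ) - (jump y t' - jump x t)| := by ring_nf
      _ ≤ _ := abs_sub _ _
      _ ≤ ε + δ := add_le_add hε hδ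
  · linarith [(abs_nonneg _).trans hδ]

end Trim

/-- if `#Ã₁(x) ≤ 1` then the modulus record time trimmer `R̃_trim` is
jointly `J₁`-continuous at `x`. -/
theorem stmt13 (x : I → ℝ) (hx : Cadlag x) (hA : (tildeA x 1).Subsingleton)
    (xn : ℕ → I → ℝ) (hxn : ∀ n, Cadlag (xn n)) (hJ1 : J1Tendsto xn x) :
    ∃ l : ℕ → I → I, (∀ n, IsTimeChange (l n)) ∧
      Tendsto (fun n => dNorm (fun τ => (l n τ : ℝ) - (τ : ℝ))) atTop (𝓝 0) ∧
      Tendsto (fun n => dNorm (fun τ => xn n (l n τ) - x τ)) atTop (𝓝 0) ∧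
      Tendsto (fun n => dNorm (fun τ => modRecordTrim (xn n) (l n τ) - modRecordTrim x τ))
        atTop (𝓝 0) := by
  obtain ⟨l, hl, hlI, hlx⟩ := hJ1
  refine ⟨l, hl, hlI, hlx, ?_⟩
  set ε : ℕ → ℝ := fun n => dNorm fun τ => xn n (l n τ) - x τ
  have hε n τ : |xn n (l n τ) - x τ| ≤ ε n := abs_comp_sub_le_dNorm hx (hxn n) (l n) τ
  have hjump n s : |jump (xn n) (l n s) - jump x s| ≤ 2 * ε n :=
    hx.abs_jump_comp_sub_le (hxn n) (hl n) (hε n) s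
  have key : ∀ᶠ n in atTop,
      ∀ τ, |modRecordTrim (xn n) (l n τ) - modRecordTrim x τ| ≤ ε n + 2 * ε n := by
    rcases (tildeA x 1).eq_empty_or_nonempty with hA0 | ⟨t, ht⟩
    · refine Eventually.of_forall fun n τ =>
        abs_modRecordTrim_sub_le_of_tildeA_eq_empty hA0 (hε n τ) fun u => ?_
      obtain ⟨s, rfl⟩ := (hl n).surjective u
      simpa [hx.jump_eq_zero_of_tildeA_eq_empty hA0 s] using hjump n s
    · obtain ⟨M, hM, hgap⟩ := hx.exists_lt_forall_ne_abs_jump_lt ht.2.2.1 fun u hu =>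
        hx.abs_jump_lt_of_tildeA_subsingleton hA ht hu
      filter_upwards [hlx.eventually (eventually_le_nhds (div_pos (sub_pos.2 hM) four_pos))]
        with n hn τ
      have hAn := tildeA_eq_singleton_of_abs_jump_comp_sub_le (hl n) ht.1 hgap (hjump n)
        (by linarith)
      exact abs_modRecordTrim_sub_le_of_tildeA_eq_singleton (hA.eq_singleton_of_mem ht) hAn
        (hl n).2.1.le_iff_le (hε n τ) (hjump n t)
  refine squeeze_zero' (Eventually.of_forall fun n => dNorm_nonneg _)
    (key.mono fun n hn => dNorm_le hn) ?_
  simpa using hlx.add (hlx.const_mul 2)
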